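/- arXiv:1711.04122 — 3 statements merged into one kernel-verified Lean document; each statement's English description precedes it below -/
import Mathlib

section
/- If G_Λ is an integral basis for a countable set of exponents Λ (i.e., every λ_j is a ℤ-linear combination of elements of G_Λ), then two exponential sums A₁ = Σ_{j≥1} a_j e^{λ_j p} and A₂ = Σ_{j≥1} b_j e^{λ_j p} satisfy A₁ ∼* A₂ if and only if there exists a single vector x₀ ∈ ℝ^{#G_Λ} such that b_j = a_j e^{i ⟨r_j, x₀⟩} for every j ≥ 1, where r_j ∈ ℤ^{#G_Λ} are the coordinate vectors of λ_j with respect to G_Λ. -/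
/-!
A ℚ-linear map `ψ` enters the constraint `b j = a j * exp (i ψ (Λ j))` only through the phases
`exp (i ψ (g k))`, i.e. through a point `z` of the compact space `ℕ → Circle`, on which the
constraint for index `j` is the closed condition `b j = a j * ∏ₖ z k ^ r j k`. Bohr equivalence
says that every finite set of these constraints is satisfiable, so by compactness one `z`
satisfies all of them, and `x k = arg (z k)` works. Conversely, since `g` is linearly independent
there is a ℚ-linear map with `ψ (g k) = x k`.
-/

def BohrEquiv (Λ : ℕ → ℝ) (a b : ℕ → ℂ) : Prop :=
  ∀ n : ℕ, ∃ ψ : ℝ →ₗ[ℚ] ℝ, ∀ j ≤ n, b j = a j * Complex.exp (Complex.I * (ψ (Λ j) : ℂ))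

theorem LinearIndependent.exists_linearMap_apply_eq {K V W ι : Type*} [DivisionRing K]
    [AddCommGroup V] [Module K V] [AddCommGroup W] [Module K W] {g : ι → V}
    (hg : LinearIndependent K g) (x : ι → W) : ∃ ψ : V →ₗ[K] W, ∀ i, ψ (g i) = x i := by
  obtain ⟨ψ, hψ⟩ := (Finsupp.linearCombination K x ∘ₗ hg.repr).exists_extend
  refine ⟨ψ, fun i => ?_⟩
  have hgi : g i ∈ Submodule.span K (Set.range g) := Submodule.subset_span ⟨i, rfl⟩
  simpa [hg.repr_eq_single i ⟨g i, hgi⟩ rfl] using LinearMap.congr_fun hψ ⟨g i, hgi⟩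

theorem map_finsuppSum_intCast_mul {F ι : Type*} [FunLike F ℝ ℝ] [AddMonoidHomClass F ℝ ℝ]
    (ψ : F) (f : ι →₀ ℤ) (t : ι → ℝ) :
    ψ (f.sum fun k c => (c : ℝ) * t k) = f.sum fun k c => (c : ℝ) * ψ (t k) := by
  simp [Finsupp.sum, map_sum, ← zsmul_eq_mul, map_zsmul]

theorem Circle.exp_sum {ι : Type*} (s : Finset ι) (u : ι → ℝ) :
    Circle.exp (∑ k ∈ s, u k) = ∏ k ∈ s, Circle.exp (u k) := by
  have := congrArg Additive.toMul (map_sum Circle.expHom u s)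
  simp only [toMul_sum, Circle.expHom_apply] at this
  exact this

theorem Complex.exp_I_mul_finsuppSum_intCast_mul {ι : Type*} (f : ι →₀ ℤ) (t : ι → ℝ) :
    Complex.exp (Complex.I * ((f.sum fun k c => (c : ℝ) * t k : ℝ) : ℂ)) =
      ((f.prod fun k c => Circle.exp (t k) ^ c : Circle) : ℂ) := by
  rw [mul_comm, ← Circle.coe_exp, Finsupp.sum, Finsupp.prod]
  simp only [Circle.exp_sum, Circle.exp_intCast_mul]

theorem exists_forall_of_forall_exists_forall_le {X : Type*} [TopologicalSpace X] [CompactSpace X]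
    {P : ℕ → X → Prop} (hP : ∀ j, IsClosed {x | P j x}) (h : ∀ n, ∃ x, ∀ j ≤ n, P j x) :
    ∃ x, ∀ j, P j x := by
  have hclosed (n : ℕ) : IsClosed {x | ∀ j ≤ n, P j x} := by
    simp only [Set.ofPred_forall]
    exact isClosed_iInter fun j => isClosed_iInter fun _ => hP j
  obtain ⟨x, hx⟩ := IsCompact.nonempty_iInter_of_sequence_nonempty_isCompact_isClosed
    (fun n => {x | ∀ j ≤ n, P j x}) (fun n _ hx j hj => hx j (hj.trans n.le_succ)) h
    (hclosed 0).isCompact hclosed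
  exact ⟨x, fun j => Set.mem_iInter.1 hx j j le_rfl⟩

theorem isClosed_setOf_eq_mul_finsuppProd_zpow {ι : Type*} (f : ι →₀ ℤ) (a b : ℂ) :
    IsClosed {z : ι → Circle | b = a * ((f.prod fun k c => z k ^ c : Circle) : ℂ)} := by
  have : Continuous fun z : ι → Circle => f.prod fun k c => z k ^ c :=
    continuous_finsetProd _ fun k _ => (continuous_apply k).zpow _
  exact isClosed_eq continuous_const (continuous_const.mul (continuous_subtype_val.comp this))

theorem bohrEquiv_iff_single_vector_of_integral_basis_general
    (Λ : ℕ → ℝ)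
    (g : ℕ → ℝ) (hg : LinearIndependent ℚ g)
    (r : ℕ → (ℕ →₀ ℤ)) (hr : ∀ j, Λ j = (r j).sum fun k c => (c : ℝ) * g k)
    (a b : ℕ → ℂ) :
    BohrEquiv Λ a b ↔
    ∃ x : ℕ → ℝ, ∀ j, b j =
      a j * Complex.exp (Complex.I * (((r j).sum fun k c => (c : ℝ) * x k : ℝ) : ℂ)) := by
  have hψΛ (ψ : ℝ →ₗ[ℚ] ℝ) (j : ℕ) :
      ψ (Λ j) = (r j).sum fun k c => (c : ℝ) * ψ (g k) := by
    rw [hr j, map_finsuppSum_intCast_mul]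
  simp only [Complex.exp_I_mul_finsuppSum_intCast_mul]
  constructor
  · intro h
    obtain ⟨z, hz⟩ := exists_forall_of_forall_exists_forall_le
      (fun j => isClosed_setOf_eq_mul_finsuppProd_zpow (r j) (a j) (b j)) fun n => by
        obtain ⟨ψ, hψ⟩ := h n
        refine ⟨fun k => Circle.exp (ψ (g k)), fun j hj => ?_⟩
        rw [hψ j hj, hψΛ, Complex.exp_I_mul_finsuppSum_intCast_mul]
    exact ⟨fun k => Complex.arg (z k), fun j => by simpa only [Circle.exp_arg] using hz j⟩
  · rintro ⟨x, hx⟩ n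
    obtain ⟨ψ, hψ⟩ := hg.exists_linearMap_apply_eq x
    refine ⟨ψ, fun j _ => ?_⟩
    rw [hψΛ, Complex.exp_I_mul_finsuppSum_intCast_mul]
    simpa only [hψ] using hx j

/-- With an integral basis `g` (each exponent a ℤ-linear combination of the ℚ-linearly
independent family `g`, with coordinates `r j`), Bohr equivalence is characterized by a
single vector `x₀`. -/
theorem bohrEquiv_iff_single_vector_of_integral_basis
    (Λ : ℕ → ℝ) (hΛ : Function.Injective Λ)
    (g : ℕ → ℝ) (hg : LinearIndependent ℚ g)
    (r : ℕ → (ℕ →₀ ℤ)) (hr : ∀ j, Λ j = (r j).sum fun k c => (c : ℝ) * g k)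
    (a b : ℕ → ℂ) :
    BohrEquiv Λ a b ↔
    ∃ x : ℕ → ℝ, ∀ j, b j =
      a j * Complex.exp (Complex.I * (((r j).sum fun k c => (c : ℝ) * x k : ℝ) : ℂ)) :=
  bohrEquiv_iff_single_vector_of_integral_basis_general Λ g hg r hr a b
end

section
/- Let Λ = {λ₁,…,λₙ} be distinct real numbers and let f₁(t) = Σ_{j=1}^n a_j e^{i λ_j t} and f₂(t) = Σ_{j=1}^n b_j e^{i λ_j t} be equivalent trigonometric polynomials (f₁ ∼* f₂). Then for every d > 0 and every ε > 0 there exists τ > d such that Σ_{j=1}^n |a_j e^{i λ_j τ} − b_j| < ε. -/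
/-!
Bohr's mean-value proof of Kronecker's theorem. With `θⱼ = ψ(λⱼ)`, the trigonometric polynomial
`G_N(τ) = ∏ⱼ (1 + e^{i(λⱼτ - θⱼ)})^N` has at most `(N+1)^n` frequencies, and since `ψ` is additive
the coefficient at frequency `ω` has phase `e^{-iψ(ω)}`. So the moduli of the coefficients add up
to at least `2^{Nn}` (the value of `G_N` with each `e^{iλⱼτ}` replaced by `e^{iθⱼ}`), and by
Cauchy–Schwarz their squares, which give the mean value of `|G_N|²` over long intervals, add up to
at least `4^{Nn}/(N+1)^n`. If for every `τ > d` some `e^{i(λⱼτ - θⱼ)}` stayed `δ`-far from `1`,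
then `|G_N|² ≤ (4^n (1 - δ²/4))^N` on `(d, ∞)`, below that mean value once `N` is large. Hence
some `τ > d` brings every `e^{iλⱼτ}` within `δ` of `e^{iθⱼ}`, and then the sum in the theorem is
at most `δ ∑ⱼ ‖aⱼ‖`.
-/

open Complex Finset ComplexConjugate AddMonoidAlgebra
open scoped Pointwise

lemma norm_exp_sub_exp (x y : ℝ) :
    ‖exp (x * I) - exp (y * I)‖ = ‖exp (↑(x - y) * I) - 1‖ := by
  have : exp (x * I) = exp (↑(x - y) * I) * exp (y * I) := by
    rw [← exp_add]; push_cast; ring_nf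
  rw [this, ← sub_one_mul, norm_mul, norm_exp_ofReal_mul_I, mul_one]

lemma norm_one_add_sq {w : ℂ} (hw : ‖w‖ = 1) : ‖1 + w‖ ^ 2 = 4 - ‖w - 1‖ ^ 2 := by
  have := parallelogram_law_with_norm ℝ (1 : ℂ) w
  rw [norm_sub_rev, norm_one, hw] at this
  linarith

lemma norm_prod_one_add_pow_sq_le {ι : Type*} [Fintype ι] {w : ι → ℂ} (hw : ∀ j, ‖w j‖ = 1)
    {δ : ℝ} (hδ : 0 ≤ δ) {j₀ : ι} (hj₀ : δ ≤ ‖w j₀ - 1‖) (N : ℕ) :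
    ‖∏ j, (1 + w j) ^ N‖ ^ 2 ≤ (4 ^ Fintype.card ι * (1 - δ ^ 2 / 4)) ^ N := by
  classical
  have hfac : ∀ j, ‖1 + w j‖ ^ 2 / 4 = 1 - ‖w j - 1‖ ^ 2 / 4 := fun j => by
    rw [norm_one_add_sq (hw j)]; ring
  have hle : ∏ j, ‖1 + w j‖ ^ 2 / 4 ≤ 1 - δ ^ 2 / 4 := by
    rw [← mul_prod_erase _ _ (mem_univ j₀)]
    have h0 : ∀ j, 0 ≤ ‖1 + w j‖ ^ 2 / 4 := fun j => by positivity
    calc _ ≤ ‖1 + w j₀‖ ^ 2 / 4 * 1 := by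
          gcongr
          exact prod_le_one (fun j _ => h0 j) fun j _ => by
            rw [hfac]; linarith [sq_nonneg ‖w j - 1‖]
      _ ≤ 1 - δ ^ 2 / 4 := by
          rw [mul_one, hfac]
          gcongr
  have h4 : ∏ j, ‖1 + w j‖ ^ 2 = 4 ^ Fintype.card ι * ∏ j, ‖1 + w j‖ ^ 2 / 4 := by
    rw [prod_div_distrib, prod_const, card_univ, mul_div_cancel₀ _ (by positivity)]
  calc ‖∏ j, (1 + w j) ^ N‖ ^ 2 = (∏ j, ‖1 + w j‖ ^ 2) ^ N := by
        simp only [norm_prod, norm_pow, ← prod_pow, ← pow_mul, mul_comm]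
    _ ≤ _ := by
        rw [h4]
        gcongr

lemma norm_intervalIntegral_exp_le {ω : ℝ} (hω : ω ≠ 0) (d T : ℝ) :
    ‖∫ τ in d..T, exp (↑(ω * τ) * I)‖ ≤ 2 / |ω| := by
  have hc : (ω : ℂ) * I ≠ 0 := mul_ne_zero (ofReal_ne_zero.2 hω) I_ne_zero
  have he : ∀ τ : ℝ, exp (↑(ω * τ) * I) = exp (ω * I * τ) := fun τ => by push_cast; ring_nf
  simp_rw [he]
  rw [integral_exp_mul_complex hc, norm_div, norm_mul, norm_I, mul_one, norm_real,
    Real.norm_eq_abs]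
  gcongr
  refine (norm_sub_le _ _).trans_eq ?_
  simp only [← he, norm_exp_ofReal_mul_I]
  norm_num

lemma ofReal_norm_sum_mul_exp_sq (s : Finset ℝ) (g : ℝ → ℂ) (τ : ℝ) :
    (‖∑ ω ∈ s, g ω * exp (↑(ω * τ) * I)‖ ^ 2 : ℂ) =
      ∑ p ∈ s ×ˢ s, g p.1 * conj (g p.2) * exp (↑((p.1 - p.2) * τ) * I) := by
  rw [← mul_conj', map_sum, sum_mul_sum, ← sum_product']
  refine sum_congr rfl fun p _ => ?_
  rw [map_mul, ← exp_conj, map_mul, conj_ofReal, conj_I]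
  rw [mul_mul_mul_comm, ← exp_add]
  push_cast
  ring_nf

lemma exists_sum_norm_sq_mul_sub_le_integral (s : Finset ℝ) (g : ℝ → ℂ) (d : ℝ) :
    ∃ K, ∀ T, (∑ ω ∈ s, ‖g ω‖ ^ 2) * (T - d) - K ≤
      ∫ τ in d..T, ‖∑ ω ∈ s, g ω * exp (↑(ω * τ) * I)‖ ^ 2 := by
  classical
  refine ⟨∑ p ∈ s.offDiag, ‖g p.1‖ * ‖g p.2‖ * (2 / |p.1 - p.2|), fun T => ?_⟩
  set E : ℂ := ∑ p ∈ s.offDiag,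
    g p.1 * conj (g p.2) * ∫ τ in d..T, exp (↑((p.1 - p.2) * τ) * I) with hE
  have hint : ((∫ τ in d..T, ‖∑ ω ∈ s, g ω * exp (↑(ω * τ) * I)‖ ^ 2 : ℝ) : ℂ) =
      ((∑ ω ∈ s, ‖g ω‖ ^ 2) * (T - d) : ℝ) + E := by
    rw [← intervalIntegral.integral_ofReal]
    simp_rw [ofReal_pow, ofReal_norm_sum_mul_exp_sq]
    rw [intervalIntegral.integral_finsetSum fun p _ => by
        exact (continuous_const.mul (by fun_prop)).intervalIntegrable _ _,
      ← diag_union_offDiag, sum_union (disjoint_diag_offDiag s), sum_diag]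
    simp only [intervalIntegral.integral_const_mul, sub_self, zero_mul, ofReal_zero, exp_zero,
      intervalIntegral.integral_const, real_smul, mul_one, mul_conj', hE]
    push_cast
    rw [sum_mul]
    exact congrArg (· + _) (sum_congr rfl fun _ _ => mul_comm _ _)
  have hnorm : ‖E‖ ≤ ∑ p ∈ s.offDiag, ‖g p.1‖ * ‖g p.2‖ * (2 / |p.1 - p.2|) := by
    refine (norm_sum_le _ _).trans (sum_le_sum fun p hp => ?_)
    rw [norm_mul, norm_mul, Complex.norm_conj]
    exact mul_le_mul_of_nonneg_left
      (norm_intervalIntegral_exp_le (sub_ne_zero.2 (mem_offDiag.1 hp).2.2) d T) (by positivity)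
  have hre := congrArg re hint
  rw [ofReal_re, add_re, ofReal_re] at hre
  linarith [abs_le.1 ((abs_re_le_norm E).trans hnorm)]

lemma le_of_forall_mul_sub_le_integral {f : ℝ → ℝ} {d S U K : ℝ} (hf : Continuous f)
    (hU : ∀ τ, d < τ → f τ ≤ U) (hK : ∀ T, S * (T - d) - K ≤ ∫ τ in d..T, f τ) : S ≤ U := by
  by_contra! hUS
  set T := d + (|K| + 1) / (S - U)
  have hdT : d ≤ T := le_add_of_nonneg_right (by have := sub_pos.2 hUS; positivity)
  have hint : ∫ τ in d..T, f τ ≤ U * (T - d) := by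
    refine (intervalIntegral.integral_mono_on_of_le_Ioo hdT (hf.intervalIntegrable _ _)
      intervalIntegrable_const fun τ hτ => hU τ hτ.1).trans_eq ?_
    rw [intervalIntegral.integral_const, smul_eq_mul, mul_comm]
  have hT : (S - U) * (T - d) = |K| + 1 := by
    simp only [T, add_sub_cancel_left]
    field_simp [(sub_pos.2 hUS).ne']
  nlinarith [hK T, le_abs_self K]

lemma exists_add_one_pow_mul_pow_lt_one (k : ℕ) {q : ℝ} (hq₀ : 0 < q) (hq₁ : q < 1) :
    ∃ N : ℕ, ((N : ℝ) + 1) ^ k * q ^ N < 1 := by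
  have h := (Filter.tendsto_add_atTop_iff_nat 1).2
    (tendsto_pow_const_mul_const_pow_of_lt_one k hq₀.le hq₁)
  obtain ⟨N, hN⟩ := (h.eventually (gt_mem_nhds hq₀)).exists
  refine ⟨N, lt_of_mul_lt_mul_right ?_ hq₀.le⟩
  simpa [pow_succ, mul_assoc] using hN

section
variable {k G : Type*} [CommSemiring k] [AddCommMonoid G] [DecidableEq G]

lemma card_support_coeff_prod_le {ι : Type*} (s : Finset ι) (f : ι → k[G]) :
    #(∏ i ∈ s, f i).coeff.support ≤ ∏ i ∈ s, #(f i).coeff.support := by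
  classical
  induction s using Finset.induction_on with
  | empty => simpa [one_def, coeff_single] using
      (card_le_card Finsupp.support_single_subset).trans (card_singleton _).le
  | insert a s ha ih =>
    rw [prod_insert ha, prod_insert ha]
    calc #(f a * ∏ i ∈ s, f i).coeff.support
        ≤ #((f a).coeff.support + (∏ i ∈ s, f i).coeff.support) :=
          card_le_card (support_coeff_mul_subset _ _)
      _ ≤ _ := card_add_le.trans (Nat.mul_le_mul_left _ ih)

lemma card_support_coeff_pow_le {x : k[G]} {a : G} (hx : x.coeff.support ⊆ {0, a}) (N : ℕ) :
    #(x ^ N).coeff.support ≤ N + 1 := by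
  suffices h : (x ^ N).coeff.support ⊆ (range (N + 1)).image (· • a) from
    (card_le_card h).trans (card_image_le.trans (card_range _).le)
  induction N with
  | zero => simpa [one_def, coeff_single] using Finsupp.support_single_subset
  | succ N ih =>
    rw [pow_succ]
    refine (support_coeff_mul_subset _ _).trans ?_
    intro _ h
    obtain ⟨b, hb, c, hc, rfl⟩ := mem_add.1 h
    obtain ⟨i, hi, rfl⟩ := mem_image.1 (ih hb)
    rcases mem_insert.1 (hx hc) with rfl | hc
    · exact mem_image.2 ⟨i, by simp at hi ⊢; omega, by simp⟩
    · rw [mem_singleton.1 hc]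
      exact mem_image.2 ⟨i + 1, by simp at hi ⊢; omega, by simp [succ_nsmul]⟩

end

/-- A trigonometric polynomial `∑ c_ω e^{iωτ}` is encoded as `∑ c_ω • single ω 1 : ℂ[ℝ]`; it is
evaluated at the character `ω ↦ e^{iψ(ω)}`, the value at time `τ` being `ψ = (· * τ)`. -/
noncomputable def expEval (ψ : ℝ →+ ℝ) : ℂ[ℝ] →ₐ[ℂ] ℂ :=
  AddMonoidAlgebra.lift ℂ ℂ ℝ
    { toFun ω := exp (ψ ω.toAdd * I)
      map_one' := by simp
      map_mul' x y := by simp [add_mul, exp_add] }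

lemma expEval_apply (ψ : ℝ →+ ℝ) (p : ℂ[ℝ]) :
    expEval ψ p = ∑ ω ∈ p.coeff.support, p.coeff ω * exp (ψ ω * I) := by
  rw [expEval, AddMonoidAlgebra.lift_apply, Finsupp.sum]
  rfl

lemma expEval_mulRight_apply (τ : ℝ) (p : ℂ[ℝ]) :
    expEval (AddMonoidHom.mulRight τ) p = ∑ ω ∈ p.coeff.support, p.coeff ω * exp (↑(ω * τ) * I) :=
  expEval_apply _ p

lemma expEval_single (ψ : ℝ →+ ℝ) (ω : ℝ) (c : ℂ) :
    expEval ψ (single ω c) = c * exp (ψ ω * I) := by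
  rw [expEval, AddMonoidAlgebra.lift_single]
  rfl

lemma norm_expEval_sq_le (ψ : ℝ →+ ℝ) (p : ℂ[ℝ]) :
    ‖expEval ψ p‖ ^ 2 ≤ #p.coeff.support * ∑ ω ∈ p.coeff.support, ‖p.coeff ω‖ ^ 2 := by
  have h : ‖expEval ψ p‖ ≤ ∑ ω ∈ p.coeff.support, ‖p.coeff ω‖ := by
    rw [expEval_apply]
    refine (norm_sum_le _ _).trans_eq (sum_congr rfl fun ω _ => ?_)
    rw [norm_mul, norm_exp_ofReal_mul_I, mul_one]
  exact (pow_le_pow_left₀ (norm_nonneg _) h 2).trans sq_sum_le_card_mul_sum_sq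

section Kronecker
variable {ι : Type*} [Fintype ι] (lam : ι → ℝ) (ψ : ℝ →+ ℝ) (N : ℕ)

noncomputable def kroneckerPoly : ℂ[ℝ] :=
  ∏ j, (1 + single (lam j) (exp (↑(-ψ (lam j)) * I))) ^ N

lemma card_support_kroneckerPoly_le :
    #(kroneckerPoly lam ψ N).coeff.support ≤ (N + 1) ^ Fintype.card ι := by
  classical
  refine (card_support_coeff_prod_le _ _).trans ?_
  rw [← card_univ, ← prod_const]
  refine prod_le_prod' fun j _ => card_support_coeff_pow_le (a := lam j) ?_ N
  rw [coeff_add, one_def, coeff_single, coeff_single]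
  refine Finsupp.support_add.trans (union_subset ?_ ?_) <;>
    exact Finsupp.support_single_subset.trans (by simp)

lemma expEval_kroneckerPoly_self :
    expEval ψ (kroneckerPoly lam ψ N) = (2 ^ N) ^ Fintype.card ι := by
  simp only [kroneckerPoly, map_prod, map_pow, map_add, map_one, expEval_single, ← exp_add]
  norm_num

lemma expEval_mulRight_kroneckerPoly (τ : ℝ) :
    expEval (AddMonoidHom.mulRight τ) (kroneckerPoly lam ψ N) =
      ∏ j, (1 + exp (↑(lam j * τ - ψ (lam j)) * I)) ^ N := by
  simp only [kroneckerPoly, map_prod, map_pow, map_add, map_one, expEval_single, ← exp_add]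
  congr! 4
  simp only [AddMonoidHom.coe_mulRight]
  push_cast
  ring

lemma norm_expEval_mulRight_kroneckerPoly_sq_le {τ δ : ℝ} (hδ : 0 ≤ δ) {j₀ : ι}
    (hj₀ : δ ≤ ‖exp (↑(lam j₀ * τ) * I) - exp (↑(ψ (lam j₀)) * I)‖) :
    ‖expEval (AddMonoidHom.mulRight τ) (kroneckerPoly lam ψ N)‖ ^ 2 ≤
      (4 ^ Fintype.card ι * (1 - δ ^ 2 / 4)) ^ N := by
  rw [expEval_mulRight_kroneckerPoly]
  refine norm_prod_one_add_pow_sq_le (fun j => norm_exp_ofReal_mul_I _) hδ (j₀ := j₀) ?_ N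
  rwa [← norm_exp_sub_exp]

lemma lt_sum_norm_sq_coeff_kroneckerPoly {q : ℝ} (hN : ((N : ℝ) + 1) ^ Fintype.card ι * q ^ N < 1) :
    (4 ^ Fintype.card ι * q) ^ N <
      ∑ ω ∈ (kroneckerPoly lam ψ N).coeff.support, ‖(kroneckerPoly lam ψ N).coeff ω‖ ^ 2 := by
  set n := Fintype.card ι
  have hself := norm_expEval_sq_le ψ (kroneckerPoly lam ψ N)
  rw [expEval_kroneckerPoly_self] at hself
  have hcard : (#(kroneckerPoly lam ψ N).coeff.support : ℝ) ≤ (N + 1) ^ n := by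
    exact_mod_cast card_support_kroneckerPoly_le lam ψ N
  have h4 : ‖((2 : ℂ) ^ N) ^ n‖ ^ 2 = (4 ^ n) ^ N := by
    rw [norm_pow, norm_pow, RCLike.norm_ofNat, show (4 : ℝ) = 2 ^ 2 by norm_num,
      ← pow_mul, ← pow_mul, ← pow_mul, ← pow_mul]
    ring
  refine lt_of_mul_lt_mul_left ?_ (by positivity : (0 : ℝ) ≤ (N + 1) ^ n)
  calc ((N : ℝ) + 1) ^ n * (4 ^ n * q) ^ N = (4 ^ n) ^ N * ((N + 1) ^ n * q ^ N) := by
        rw [mul_pow]; ring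
    _ < (4 ^ n) ^ N := mul_lt_of_lt_one_right (by positivity) hN
    _ ≤ _ := by
      rw [← h4]
      exact hself.trans (by gcongr)

end Kronecker

theorem exists_gt_forall_norm_exp_sub_exp_lt {ι : Type*} [Fintype ι] (lam : ι → ℝ)
    (ψ : ℝ →+ ℝ) (d : ℝ) {δ : ℝ} (hδ : 0 < δ) :
    ∃ τ, d < τ ∧ ∀ j, ‖exp (↑(lam j * τ) * I) - exp (↑(ψ (lam j)) * I)‖ < δ := by
  wlog hδ₁ : δ ≤ 1 generalizing δ
  · obtain ⟨τ, hdτ, hτ⟩ := this one_pos le_rfl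
    exact ⟨τ, hdτ, fun j => (hτ j).trans (by linarith)⟩
  by_contra! hfar
  obtain ⟨N, hN⟩ := exists_add_one_pow_mul_pow_lt_one (Fintype.card ι) (q := 1 - δ ^ 2 / 4)
    (by nlinarith) (by nlinarith)
  set P := kroneckerPoly lam ψ N
  obtain ⟨K, hK⟩ := exists_sum_norm_sq_mul_sub_le_integral P.coeff.support P.coeff d
  refine (lt_sum_norm_sq_coeff_kroneckerPoly lam ψ N hN).not_ge
    (le_of_forall_mul_sub_le_integral (by fun_prop) (fun τ hτ => ?_) hK)
  obtain ⟨j₀, hj₀⟩ := hfar τ hτ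
  rw [← expEval_mulRight_apply]
  exact norm_expEval_mulRight_kroneckerPoly_sq_le lam ψ N hδ.le hj₀

theorem exists_tau_gt_of_equiv_general
    (n : ℕ) (lam : Fin n → ℝ)
    (a b : Fin n → ℂ)
    (h : ∃ ψ : ℝ →ₗ[ℚ] ℝ, ∀ j, b j = a j * Complex.exp (Complex.I * (ψ (lam j) : ℂ)))
    (d ε : ℝ) (hε : 0 < ε) :
    ∃ τ : ℝ, d < τ ∧
      ∑ j, ‖a j * Complex.exp (Complex.I * (lam j * τ : ℝ)) - b j‖ < ε := by
  obtain ⟨ψ, hψ⟩ := h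
  set A := ∑ j, ‖a j‖
  obtain ⟨τ, hdτ, hτ⟩ := exists_gt_forall_norm_exp_sub_exp_lt lam ψ.toAddMonoidHom d
    (div_pos hε (by positivity : 0 < A + 1))
  refine ⟨τ, hdτ, ?_⟩
  calc ∑ j, ‖a j * exp (I * ↑(lam j * τ)) - b j‖
      ≤ ∑ j, ‖a j‖ * (ε / (A + 1)) := sum_le_sum fun j _ => by
        rw [hψ, ← mul_sub, norm_mul, mul_comm I, mul_comm I]
        exact mul_le_mul_of_nonneg_left (hτ j).le (norm_nonneg _)
    _ = A * ε / (A + 1) := by rw [← sum_mul, mul_div_assoc]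
    _ < ε := by
      rw [div_lt_iff₀ (by positivity)]
      nlinarith

theorem exists_tau_gt_of_equiv
    (n : ℕ) (lam : Fin n → ℝ) (hlam : Function.Injective lam)
    (a b : Fin n → ℂ)
    (h : ∃ ψ : ℝ →ₗ[ℚ] ℝ, ∀ j, b j = a j * Complex.exp (Complex.I * (ψ (lam j) : ℂ)))
    (d ε : ℝ) (hd : 0 < d) (hε : 0 < ε) :
    ∃ τ : ℝ, d < τ ∧
      ∑ j, ‖a j * Complex.exp (Complex.I * (lam j * τ : ℝ)) - b j‖ < ε :=
  exists_tau_gt_of_equiv_general n lam a b h d ε hε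
end

section
/- Let f₁, f₂ be equivalent trigonometric polynomials with the same distinct real exponents {λ₁,…,λₙ}. Then there exists an increasing unbounded sequence (τ_m) of positive reals such that f₁(· + τ_m) converges uniformly on ℝ to f₂. In particular, every function equivalent to f₁ is a limit of translates of f₁. -/
/-!
Everything rests on Kronecker's theorem in Bohr's form: if every integer relation
`∑ mⱼ λⱼ = 0` also holds for the `θⱼ` (as it does for `θⱼ = ψ λⱼ` with `ψ` ℚ-linear),
then for every `ε > 0` and `M` some `τ ≥ M` has `|e^{iλⱼτ} - e^{iθⱼ}| < ε` for all `j`.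
To see it, expand `F(t) = ∏ⱼ |1 + e^{i(λⱼt - θⱼ)}|^{2N}` as a trigonometric polynomial.
Its coefficients at frequency `0` are real and nonnegative, precisely because of the
relations, and include the constant term `C(2N, N)^n`; hence
`∫_M^T F ≥ (T - M) C(2N, N)^n - O(1)`. If the approximation failed for all `t ≥ M`, one
factor of `F(t)` would be at most `(4 - ε²)^N` there, so `F ≤ (4^n (1 - ε²/4))^N`, which is
smaller than `C(2N, N)^n ≥ (4^N / 2N)^n` once `N` is large. Kronecker's theorem yields
translates `τₘ → ∞` with `e^{iλⱼτₘ} → e^{iθⱼ}`, and then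
`‖f₁(· + τ) - f₂‖_∞ ≤ ∑ⱼ |aⱼ| |e^{iλⱼτ} - e^{iθⱼ}|`.
-/

open Complex Finset Filter Topology

def RespectsIntRelations {ι : Type*} [Fintype ι] (lam θ : ι → ℝ) : Prop :=
  ∀ m : ι → ℤ, ∑ j, (m j : ℝ) * lam j = 0 → ∑ j, (m j : ℝ) * θ j = 0

theorem respectsIntRelations_map {ι : Type*} [Fintype ι] (ψ : ℝ →ₗ[ℚ] ℝ) (lam : ι → ℝ) :
    RespectsIntRelations lam fun j => ψ (lam j) := fun m h => by
  simpa only [map_sum, ← zsmul_eq_mul, map_zsmul, map_zero] using congrArg ψ h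

theorem norm_exp_I_mul_sub_exp_I_mul (x y : ℝ) :
    ‖cexp (I * x) - cexp (I * y)‖ = ‖cexp (I * ↑(x - y)) - 1‖ := by
  have hfactor : cexp (I * x) - cexp (I * y) = cexp (I * y) * (cexp (I * ↑(x - y)) - 1) := by
    rw [mul_sub, ← Complex.exp_add]; push_cast; ring_nf
  rw [hfactor, norm_mul, norm_exp_I_mul_ofReal, one_mul]

theorem norm_one_add_exp_I_mul_sq (x : ℝ) :
    ‖1 + cexp (I * x)‖ ^ 2 = 4 - ‖cexp (I * x) - 1‖ ^ 2 := by
  have h := parallelogram_law_with_norm ℝ (cexp (I * x)) 1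
  rw [norm_exp_I_mul_ofReal, norm_one, add_comm (cexp _) 1] at h
  linarith

theorem one_add_mul_one_add_inv_pow {K : Type*} [Field K] {u : K} (hu : u ≠ 0) (N : ℕ) :
    ((1 + u) * (1 + u⁻¹)) ^ N =
      ∑ k ∈ range (2 * N + 1), (Nat.choose (2 * N) k : K) * u ^ ((k : ℤ) - N) := by
  have h : (1 + u) * (1 + u⁻¹) = (u + 1) ^ 2 * u⁻¹ := by field_simp; ring
  rw [h, mul_pow, ← pow_mul, add_pow, sum_mul]
  refine sum_congr rfl fun k _ => ?_
  rw [one_pow, mul_one, zpow_sub₀ hu, zpow_natCast, zpow_natCast, inv_pow]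
  ring

theorem ofReal_norm_one_add_exp_I_mul_sq_pow (x : ℝ) (N : ℕ) :
    (((‖1 + cexp (I * x)‖ ^ 2) ^ N : ℝ) : ℂ) =
      ∑ k ∈ range (2 * N + 1),
        (Nat.choose (2 * N) k : ℂ) * cexp (I * ↑((((k : ℤ) - N : ℤ) : ℝ) * x)) := by
  have hconj : (starRingEnd ℂ) (cexp (I * x)) = (cexp (I * x))⁻¹ := by
    rw [← Complex.exp_conj, ← Complex.exp_neg]; simp
  have hnorm : ((‖1 + cexp (I * x)‖ ^ 2 : ℝ) : ℂ) =
      (1 + cexp (I * x)) * (1 + (cexp (I * x))⁻¹) := by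
    rw [ofReal_pow, ← Complex.mul_conj', map_add, map_one, hconj]
  rw [ofReal_pow, hnorm, one_add_mul_one_add_inv_pow (Complex.exp_ne_zero _)]
  refine sum_congr rfl fun k _ => ?_
  rw [← Complex.exp_int_mul]; push_cast; ring_nf

theorem ofReal_prod_norm_one_add_exp_I_mul_sq_pow {ι : Type*} [Fintype ι] [DecidableEq ι]
    (x : ι → ℝ) (N : ℕ) :
    (((∏ j, ‖1 + cexp (I * x j)‖ ^ 2) ^ N : ℝ) : ℂ) =
      ∑ r ∈ Fintype.piFinset fun _ : ι => range (2 * N + 1),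
        ((∏ j, Nat.choose (2 * N) (r j) : ℕ) : ℂ) *
          cexp (I * ↑(∑ j, (((r j : ℤ) - N : ℤ) : ℝ) * x j)) := by
  rw [← prod_pow, ofReal_prod,
    prod_congr rfl fun j _ => ofReal_norm_one_add_exp_I_mul_sq_pow (x j) N, prod_univ_sum]
  refine sum_congr rfl fun r _ => ?_
  rw [prod_mul_distrib, ← Complex.exp_sum, Nat.cast_prod]
  push_cast
  rw [mul_sum]

theorem norm_integral_exp_I_mul_sub_le (L M T : ℝ) :
    ‖(∫ t in M..T, cexp (I * ↑(L * t))) - if L = 0 then ((T - M : ℝ) : ℂ) else 0‖ ≤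
      2 / |L| := by
  rcases eq_or_ne L 0 with rfl | hL
  · simp
  have hIL : I * L ≠ 0 := mul_ne_zero I_ne_zero (ofReal_ne_zero.2 hL)
  have hint : (∫ t in M..T, cexp (I * ↑(L * t))) =
      (cexp (I * ↑(L * T)) - cexp (I * ↑(L * M))) / (I * L) := by
    simp_rw [ofReal_mul, ← mul_assoc]
    exact integral_exp_mul_complex hIL
  rw [if_neg hL, sub_zero, hint, norm_div, norm_mul, norm_I, one_mul, norm_real, Real.norm_eq_abs]
  gcongr
  calc _ ≤ ‖cexp (I * ↑(L * T))‖ + ‖cexp (I * ↑(L * M))‖ := norm_sub_le _ _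
    _ = 2 := by rw [norm_exp_I_mul_ofReal, norm_exp_I_mul_ofReal]; norm_num

theorem norm_integral_sum_exp_I_mul_sub_le {κ : Type*} (s : Finset κ) (c : κ → ℂ)
    (L : κ → ℝ) (M T : ℝ) :
    ‖(∫ t in M..T, ∑ r ∈ s, c r * cexp (I * ↑(L r * t))) -
        ((T - M : ℝ) : ℂ) * ∑ r ∈ s with L r = 0, c r‖ ≤ ∑ r ∈ s, ‖c r‖ * (2 / |L r|) := by
  have hcont : ∀ r, Continuous fun t : ℝ => c r * cexp (I * ↑(L r * t)) := fun r => by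
    fun_prop
  rw [intervalIntegral.integral_finsetSum fun r _ => (hcont r).intervalIntegrable M T,
    sum_filter, mul_sum, ← sum_sub_distrib]
  refine (norm_sum_le _ _).trans (sum_le_sum fun r _ => ?_)
  have hfactor : (c r * ∫ t in M..T, cexp (I * ↑(L r * t))) -
      ((T - M : ℝ) : ℂ) * (if L r = 0 then c r else 0) =
      c r * ((∫ t in M..T, cexp (I * ↑(L r * t))) -
        if L r = 0 then ((T - M : ℝ) : ℂ) else 0) := by
    split_ifs <;> ring
  rw [intervalIntegral.integral_const_mul, hfactor, norm_mul]
  exact mul_le_mul_of_nonneg_left (norm_integral_exp_I_mul_sub_le _ _ _) (norm_nonneg _)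

theorem exists_le_integral_prod_norm_one_add_exp_I_mul_sq_pow {ι : Type*} [Fintype ι]
    {lam θ : ι → ℝ} (hrel : RespectsIntRelations lam θ) (N : ℕ) (M : ℝ) :
    ∃ B, ∀ T, M ≤ T → (T - M) * (N.centralBinom : ℝ) ^ Fintype.card ι - B ≤
      ∫ t in M..T, (∏ j, ‖1 + cexp (I * ↑(lam j * t - θ j))‖ ^ 2) ^ N := by
  classical
  set R := Fintype.piFinset fun _ : ι => range (2 * N + 1)
  set k : (ι → ℕ) → ι → ℤ := fun r j => (r j : ℤ) - N
  set L : (ι → ℕ) → ℝ := fun r => ∑ j, (k r j : ℝ) * lam j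
  set A : (ι → ℕ) → ℝ := fun r => ∑ j, (k r j : ℝ) * θ j
  set C : (ι → ℕ) → ℕ := fun r => ∏ j, Nat.choose (2 * N) (r j)
  set c : (ι → ℕ) → ℂ := fun r => (C r : ℂ) * cexp (I * ↑(-A r))
  have hexpand : ∀ t : ℝ, (((∏ j, ‖1 + cexp (I * ↑(lam j * t - θ j))‖ ^ 2) ^ N : ℝ) : ℂ) =
      ∑ r ∈ R, c r * cexp (I * ↑(L r * t)) := fun t => by
    rw [ofReal_prod_norm_one_add_exp_I_mul_sq_pow]
    refine sum_congr rfl fun r _ => ?_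
    have hphase : ∑ j, (k r j : ℝ) * (lam j * t - θ j) = -A r + L r * t := by
      simp only [A, L, mul_sub, sum_sub_distrib, sum_mul, mul_assoc]
      ring
    rw [hphase, ofReal_add, mul_add, Complex.exp_add, mul_assoc]
  have hmean : ∑ r ∈ R with L r = 0, c r =
      Complex.ofReal (∑ r ∈ R with L r = 0, (C r : ℝ)) := by
    push_cast
    refine sum_congr rfl fun r hr => ?_
    have hA : A r = 0 := hrel (k r) (mem_filter.1 hr).2
    simp [c, hA]
  have hcentral :
      (N.centralBinom : ℝ) ^ Fintype.card ι ≤ ∑ r ∈ R with L r = 0, (C r : ℝ) := by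
    have hmem : (fun _ => N) ∈ R.filter (fun r => L r = 0) :=
      mem_filter.2 ⟨Fintype.mem_piFinset.2 fun _ => mem_range.2 (by omega), by simp [L, k]⟩
    refine le_of_eq_of_le ?_ (single_le_sum (fun r _ => Nat.cast_nonneg (C r)) hmem)
    simp [C, Nat.centralBinom_eq_two_mul_choose]
  refine ⟨∑ r ∈ R, ‖c r‖ * (2 / |L r|), fun T hT => ?_⟩
  have h := norm_integral_sum_exp_I_mul_sub_le R c L M T
  rw [← intervalIntegral.integral_congr fun t _ => hexpand t, intervalIntegral.integral_ofReal,
    hmean, ← ofReal_mul, ← ofReal_sub, norm_real, Real.norm_eq_abs] at h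
  linarith [(abs_le.1 h).1, mul_le_mul_of_nonneg_left hcentral (sub_nonneg.2 hT)]

theorem prod_le_mul_pow_card_sub_one {ι : Type*} [Fintype ι] {f : ι → ℝ} {a A : ℝ}
    (h0 : ∀ i, 0 ≤ f i) (hA : ∀ i, f i ≤ A) {i₀ : ι} (hi₀ : f i₀ ≤ a) :
    ∏ i, f i ≤ a * A ^ (Fintype.card ι - 1) := by
  classical
  rw [← mul_prod_erase univ f (mem_univ i₀), Fintype.card, ← card_erase_of_mem (mem_univ i₀),
    ← prod_const]
  exact mul_le_mul hi₀ (prod_le_prod (fun i _ => h0 i) fun i _ => hA i)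
    (prod_nonneg fun i _ => h0 i) ((h0 i₀).trans hi₀)

theorem exists_pow_lt_centralBinom_pow (n : ℕ) {c : ℝ} (hc0 : 0 ≤ c) (hc1 : c < 1) :
    ∃ N : ℕ, (4 ^ n * c) ^ N < (N.centralBinom : ℝ) ^ n := by
  have hlim : Tendsto (fun N : ℕ => (2 * (N : ℝ)) ^ n * c ^ N) atTop (𝓝 0) := by
    simpa [mul_pow, mul_assoc] using
      (tendsto_pow_const_mul_const_pow_of_lt_one n hc0 hc1).const_mul ((2 : ℝ) ^ n)
  obtain ⟨N, hN, hN1⟩ :=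
    ((hlim.eventually (gt_mem_nhds one_pos)).and (eventually_ge_atTop 1)).exists
  refine ⟨N, ?_⟩
  have hcb : (4 : ℝ) ^ N ≤ 2 * N * N.centralBinom := by
    exact_mod_cast Nat.four_pow_le_two_mul_self_mul_centralBinom N hN1
  have hpos : (0 : ℝ) < (N.centralBinom : ℝ) ^ n :=
    pow_pos (by exact_mod_cast N.centralBinom_pos) n
  calc (4 ^ n * c) ^ N = ((4 : ℝ) ^ N) ^ n * c ^ N := by
        rw [mul_pow, ← pow_mul, ← pow_mul, mul_comm n N]
    _ ≤ (2 * N * N.centralBinom) ^ n * c ^ N := by gcongr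
    _ = ((2 * (N : ℝ)) ^ n * c ^ N) * (N.centralBinom : ℝ) ^ n := by ring
    _ < 1 * (N.centralBinom : ℝ) ^ n := by gcongr
    _ = (N.centralBinom : ℝ) ^ n := one_mul _

theorem le_of_forall_mul_sub_le_mul {a b B : ℝ} (h : ∀ x, 0 ≤ x → a * x - B ≤ b * x) :
    a ≤ b := by
  by_contra! hab
  have hab' : 0 < a - b := sub_pos.2 hab
  have hx := h ((|B| + 1) / (a - b)) (by positivity)
  have hcancel : (a - b) * ((|B| + 1) / (a - b)) = |B| + 1 := mul_div_cancel₀ _ hab'.ne'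
  linarith [le_abs_self B]

theorem exists_ge_forall_norm_exp_I_mul_sub_lt {ι : Type*} [Fintype ι] {lam θ : ι → ℝ}
    (hrel : RespectsIntRelations lam θ) {ε : ℝ} (hε : 0 < ε) (M : ℝ) :
    ∃ τ, M ≤ τ ∧ ∀ j, ‖cexp (I * ↑(lam j * τ)) - cexp (I * θ j)‖ < ε := by
  by_contra! hfar
  set n := Fintype.card ι
  set F : ℝ → ℝ := fun t => ∏ j, ‖1 + cexp (I * ↑(lam j * t - θ j))‖ ^ 2
  set c : ℝ := 1 - ε ^ 2 / 4 with hc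
  have hF0 : ∀ t, 0 ≤ F t := fun t => prod_nonneg fun j _ => sq_nonneg _
  have hFle : ∀ t, M ≤ t → F t ≤ 4 ^ n * c := fun t ht => by
    obtain ⟨j₀, hj₀⟩ := hfar t ht
    have hle : ∀ x : ℝ, ‖1 + cexp (I * x)‖ ^ 2 ≤ 4 := fun x => by
      rw [norm_one_add_exp_I_mul_sq]; nlinarith [sq_nonneg ‖cexp (I * x) - 1‖]
    have hj₀' : ‖1 + cexp (I * ↑(lam j₀ * t - θ j₀))‖ ^ 2 ≤ 4 * c := by
      rw [norm_one_add_exp_I_mul_sq, ← norm_exp_I_mul_sub_exp_I_mul, hc]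
      nlinarith
    have hn : n ≠ 0 := (Fintype.card_pos_iff.2 ⟨j₀⟩).ne'
    calc F t ≤ 4 * c * 4 ^ (n - 1) :=
          prod_le_mul_pow_card_sub_one (fun _ => sq_nonneg _) (fun _ => hle _) hj₀'
      _ = 4 ^ n * c := by rw [← pow_sub_one_mul hn]; ring
  have hc0 : 0 ≤ c :=
    nonneg_of_mul_nonneg_right ((hF0 M).trans (hFle M le_rfl)) (by positivity)
  have hc1 : c < 1 := by linarith [pow_pos hε 2]
  obtain ⟨N, hN⟩ := exists_pow_lt_centralBinom_pow n hc0 hc1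
  obtain ⟨B, hB⟩ := exists_le_integral_prod_norm_one_add_exp_I_mul_sq_pow hrel N M
  refine absurd (le_of_forall_mul_sub_le_mul (B := B) fun x hx => ?_) (not_le.2 hN)
  have hFcont : Continuous fun t => F t ^ N := by fun_prop
  calc (N.centralBinom : ℝ) ^ n * x - B = (M + x - M) * (N.centralBinom : ℝ) ^ n - B := by ring
    _ ≤ ∫ t in M..M + x, F t ^ N := hB (M + x) (by linarith)
    _ ≤ ∫ _ in M..M + x, (4 ^ n * c) ^ N :=
        intervalIntegral.integral_mono_on (by linarith) (hFcont.intervalIntegrable _ _)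
          intervalIntegrable_const fun t ht => pow_le_pow_left₀ (hF0 t) (hFle t ht.1) N
    _ = (4 ^ n * c) ^ N * x := by simp; ring

theorem exists_strictMono_tendsto_exp_I_mul {ι : Type*} [Fintype ι] {lam θ : ι → ℝ}
    (hrel : RespectsIntRelations lam θ) :
    ∃ τ : ℕ → ℝ, StrictMono τ ∧ (∀ m, 0 < τ m) ∧ Tendsto τ atTop atTop ∧
      ∀ j, Tendsto (fun m => cexp (I * ↑(lam j * τ m))) atTop (𝓝 (cexp (I * θ j))) := by
  choose τ hτM hτε using fun m : ℕ =>
    exists_ge_forall_norm_exp_I_mul_sub_lt hrel (Nat.one_div_pos_of_nat (n := m)) (m + 1)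
  have htop : Tendsto τ atTop atTop :=
    tendsto_atTop_mono (fun m => (le_add_of_nonneg_right zero_le_one).trans (hτM m))
      tendsto_natCast_atTop_atTop
  have hconv : ∀ j,
      Tendsto (fun m => cexp (I * ↑(lam j * τ m))) atTop (𝓝 (cexp (I * θ j))) := fun j =>
    tendsto_iff_norm_sub_tendsto_zero.2 <| squeeze_zero (fun _ => norm_nonneg _)
      (fun m => (hτε m j).le) tendsto_one_div_add_atTop_nhds_zero_nat
  obtain ⟨φ, hφ, hτφ⟩ := strictMono_subseq_of_tendsto_atTop htop
  exact ⟨τ ∘ φ, hτφ, fun m => (Nat.cast_add_one_pos (φ m)).trans_le (hτM (φ m)),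
    htop.comp hφ.tendsto_atTop, fun j => (hconv j).comp hφ.tendsto_atTop⟩

theorem tendstoUniformly_sum_exp_I_mul_add {α ι : Type*} [Fintype ι] {l : Filter α}
    (lam θ : ι → ℝ) (a : ι → ℂ) {τ : α → ℝ}
    (hτ : ∀ j, Tendsto (fun x => cexp (I * ↑(lam j * τ x))) l (𝓝 (cexp (I * θ j)))) :
    TendstoUniformly (fun x t => ∑ j, a j * cexp (I * ↑(lam j * (t + τ x))))
      (fun t => ∑ j, a j * cexp (I * θ j) * cexp (I * ↑(lam j * t))) l := by
  have hbound : Tendsto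
      (fun x => ∑ j, ‖a j‖ * ‖cexp (I * θ j) - cexp (I * ↑(lam j * τ x))‖) l (𝓝 0) := by
    simpa using tendsto_finsetSum univ fun j _ =>
      ((hτ j).const_sub (cexp (I * θ j))).norm.const_mul ‖a j‖
  refine Metric.tendstoUniformly_iff.2 fun ε hε =>
    (hbound.eventually (gt_mem_nhds hε)).mono fun x hx t => lt_of_le_of_lt ?_ hx
  rw [dist_eq_norm, ← sum_sub_distrib]
  refine (norm_sum_le _ _).trans (sum_le_sum fun j _ => le_of_eq ?_)
  have hshift : cexp (I * ↑(lam j * (t + τ x))) =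
      cexp (I * ↑(lam j * t)) * cexp (I * ↑(lam j * τ x)) := by
    rw [← Complex.exp_add]; push_cast; ring_nf
  rw [hshift, show ∀ u v w z : ℂ, u * v * w - u * (w * z) = u * w * (v - z) by
      intros; ring,
    norm_mul, norm_mul, norm_exp_I_mul_ofReal, mul_one]

theorem translates_tend_to_equivalent_general
    (n : ℕ) (lam : Fin n → ℝ)
    (a b : Fin n → ℂ)
    (h : ∃ ψ : ℝ →ₗ[ℚ] ℝ, ∀ j, b j = a j * Complex.exp (Complex.I * (ψ (lam j) : ℂ))) :
    ∃ τ : ℕ → ℝ, StrictMono τ ∧ (∀ m, 0 < τ m) ∧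
      Filter.Tendsto τ Filter.atTop Filter.atTop ∧
      TendstoUniformly
        (fun m t => ∑ j, a j * Complex.exp (Complex.I * (lam j * (t + τ m) : ℝ)))
        (fun t => ∑ j, b j * Complex.exp (Complex.I * (lam j * t : ℝ)))
        Filter.atTop := by
  obtain ⟨ψ, hψ⟩ := h
  obtain ⟨τ, hmono, hpos, htop, hconv⟩ :=
    exists_strictMono_tendsto_exp_I_mul (respectsIntRelations_map ψ lam)
  simp_rw [hψ]
  exact ⟨τ, hmono, hpos, htop, tendstoUniformly_sum_exp_I_mul_add lam _ a hconv⟩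

theorem translates_tend_to_equivalent
    (n : ℕ) (lam : Fin n → ℝ) (hlam : Function.Injective lam)
    (a b : Fin n → ℂ)
    (h : ∃ ψ : ℝ →ₗ[ℚ] ℝ, ∀ j, b j = a j * Complex.exp (Complex.I * (ψ (lam j) : ℂ))) :
    ∃ τ : ℕ → ℝ, StrictMono τ ∧ (∀ m, 0 < τ m) ∧
      Filter.Tendsto τ Filter.atTop Filter.atTop ∧
      TendstoUniformly
        (fun m t => ∑ j, a j * Complex.exp (Complex.I * (lam j * (t + τ m) : ℝ)))
        (fun t => ∑ j, b j * Complex.exp (Complex.I * (lam j * t : ℝ)))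
        Filter.atTop :=
  translates_tend_to_equivalent_general n lam a b h
end
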